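/- arXiv:1101.4909 — 6 statements merged into one kernel-verified Lean document; each statement's English description precedes it below -/
import Mathlib

section
/- Let W be a word of length x over the alphabet Fin l and let d ≥ 1. For 1 ≤ i ≤ ⌊x/d⌋ let v_i denote the suffix of W starting at position i (so v_i has length x − i + 1). Then either for all 1 ≤ i < j ≤ ⌊x/d⌋ the suffix v_j is not a prefix of v_i, or W contains a d-th power, i.e. u^d is a factor of W for some nonempty word u. -/
open List Real

/-- A word over the alphabet `Fin l`. -/
abbrev Word (l : ℕ) : Type := List (Fin l)

/-- `u ≻ v`: at the first position where they differ (a position within the length of both),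
the letter of `u` is greater than that of `v`. -/
def WGt {l : ℕ} (u v : Word l) : Prop :=
  ∃ (w u' v' : Word l) (a b : Fin l), b < a ∧ u = w ++ a :: u' ∧ v = w ++ b :: v'

/-- `W` is `n`-divided: `W = W₀W₁⋯Wₙ` with `W₁, …, Wₙ` nonempty and `W₁ ≻ W₂ ≻ ⋯ ≻ Wₙ`. -/
def NDivided {l : ℕ} (n : ℕ) (W : Word l) : Prop :=
  ∃ (W₀ : Word l) (ws : List (Word l)), ws.length = n ∧ (∀ w ∈ ws, w ≠ []) ∧
    ws.Chain' WGt ∧ W = W₀ ++ ws.flatten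

/-- `W` contains a `d`-th power of a nonempty word as a factor. -/
def ContainsPow {l : ℕ} (d : ℕ) (W : Word l) : Prop :=
  ∃ u : Word l, u ≠ [] ∧ (List.replicate d u).flatten <:+: W

lemma period_pow_prefix {α : Type*} (p : ℕ) :
    ∀ (d : ℕ) (s : List α), s.drop p <+: s → d * p ≤ s.length →
      (List.replicate d (s.take p)).flatten <+: s := by
  intro d
  induction d with
  | zero => simp
  | succ d ih =>
    intro s hper hlen
    rcases Nat.eq_zero_or_pos d with rfl | hd
    · simpa using List.take_prefix p s
    rw [List.replicate_succ, List.flatten_cons]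
    obtain ⟨t, ht⟩ := hper
    have hlen' : d * p ≤ (s.drop p).length := by
      simp only [List.length_drop]
      have : (d + 1) * p = d * p + p := by ring
      omega
    have hps' : p ≤ (s.drop p).length := le_trans (Nat.le_mul_of_pos_left p hd) hlen'
    have htake : (s.drop p).take p = s.take p := by
      conv_rhs => rw [← ht]
      rw [List.take_append_of_le_length hps']
    have hper' : (s.drop p).drop p <+: s.drop p := by
      refine ⟨t, ?_⟩
      conv_rhs => rw [← ht]
      rw [List.drop_append_of_le_length hps']
    have hih := ih (s.drop p) hper' hlen'
    rw [htake] at hih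
    conv_rhs => rw [← List.take_append_drop p s]
    exact (List.prefix_append_right_inj (s.take p)).mpr hih

theorem comparable_tails_or_power (l d : ℕ) (hd : 1 ≤ d) (W : Word l) :
    (∀ i j : ℕ, 1 ≤ i → i < j → j ≤ W.length / d →
      ¬ (W.drop (j - 1) <+: W.drop (i - 1)))
    ∨ ContainsPow d W := by
  by_cases h : ∀ i j : ℕ, 1 ≤ i → i < j → j ≤ W.length / d →
      ¬ (W.drop (j - 1) <+: W.drop (i - 1))
  · exact Or.inl h
  push_neg at h
  obtain ⟨i, j, hi, hij, hj, hpre⟩ := h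
  right
  obtain ⟨p, hp⟩ : ∃ p, j - i = p := ⟨_, rfl⟩
  set s := W.drop (i - 1) with hs
  have hdj : d * j ≤ W.length := by calc d * j = j * d := Nat.mul_comm d j
    _ ≤ W.length := (Nat.le_div_iff_mul_le (show 0 < d by omega)).mp hj
  have hdi : i ≤ d * i := Nat.le_mul_of_pos_left i (by omega)
  have hmul : d * p + d * i = d * j := by rw [← Nat.mul_add, ← hp, Nat.sub_add_cancel (le_of_lt hij)]
  have hslen : s.length = W.length - (i - 1) := by simp [hs]
  have hlen : d * p ≤ s.length := by omega
  have hper : s.drop p <+: s := by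
    have : s.drop p = W.drop (j - 1) := by
      rw [hs, List.drop_drop]
      congr 1
      omega
    rw [this]; exact hpre
  have hpow := period_pow_prefix p d s hper hlen
  refine ⟨s.take p, ?_, hpow.isInfix.trans (W.drop_suffix (i-1)).isInfix⟩
  have hp1 : 1 ≤ p := by omega
  have hslen' : 1 ≤ s.length := by
    have : 1 ≤ d * p := Nat.mul_pos (by omega) (by omega)
    omega
  intro hnil
  have h0 := congrArg List.length hnil
  rw [List.length_take] at h0
  simp only [List.length_nil] at h0
  omega
end

section
/- Let k, t ≥ 1 and let V be a word of length k·t over the alphabet Fin l. If V has at most k distinct factors of length k, then V contains a t-th power: there is a nonempty word u such that u^t is a factor of V. -/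
open List Real

/-!
Write `p(m)` for the number of factors of length `m` of `W`, and induct on a bound `s ≤ k` for
`p(k)`, keeping `|W| ≥ k + s(t - 1)`. If the suffix of length `k` occurs only once, deleting the
last letter lowers `p(k)` by one and costs one letter. Otherwise no suffix of length `m ≤ k`
occurs only once, so `p(m + 1) > p(m)` whenever some factor of length `m` has two right
extensions; as `p(k) ≤ k` this fails for some `m < k`, hence also for `m = k`. Then each
length-`k` window determines the next letter; two of the first `s + 1` such windows coincide,
and from the first of them on `W` has a period `c ≤ s`, over a stretch long enough for `t`
periods.
-/

open scoped Finset

namespace FactorComplexity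

variable {α : Type*}

def window (W : List α) (r m : ℕ) : List α := (W.drop r).take m

theorem getElem?_window (W : List α) (r m o : ℕ) :
    (window W r m)[o]? = if o < m then W[r + o]? else none := by
  simp [window, List.getElem?_take, List.getElem?_drop]

theorem window_eq_window_iff {W : List α} {r r' m : ℕ} :
    window W r m = window W r' m ↔ ∀ o < m, W[r + o]? = W[r' + o]? := by
  refine ⟨fun h o ho => ?_, fun h => List.ext_getElem? fun o => ?_⟩
  · simpa [getElem?_window, ho] using congrArg (·[o]?) h
  · simp only [getElem?_window]
    split_ifs with ho
    exacts [h o ho, rfl]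

theorem length_window {W : List α} {r m : ℕ} (h : r + m ≤ W.length) :
    (window W r m).length = m := by
  simp only [window, List.length_take, List.length_drop]
  omega

theorem window_infix (W : List α) (r m : ℕ) : window W r m <:+: W :=
  (List.take_prefix _ _).isInfix.trans (List.drop_suffix r W).isInfix

theorem exists_window_eq_of_infix {W u : List α} (h : u <:+: W) :
    ∃ r, r + u.length ≤ W.length ∧ window W r u.length = u := by
  obtain ⟨s, t, rfl⟩ := h
  refine ⟨s.length, by simp, ?_⟩
  rw [window, List.append_assoc, List.drop_left, List.take_left]

theorem window_add (W : List α) (r a b : ℕ) :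
    window W r (a + b) = window W r a ++ window W (r + a) b := by
  rw [window, window, window, List.take_add, List.drop_drop]

theorem take_window (W : List α) (r : ℕ) {m n : ℕ} (h : m ≤ n) :
    (window W r n).take m = window W r m := by
  rw [window, window, List.take_take, Nat.min_eq_left h]

theorem window_dropLast {W : List α} {r m : ℕ} (h : r + m < W.length) :
    window W.dropLast r m = window W r m := by
  rw [window, window, List.dropLast_eq_take, List.drop_take, List.take_take]
  congr 1
  omega

theorem flatten_replicate_window_of_periodic {W : List α} {c : ℕ} :
    ∀ {q r : ℕ}, (∀ x, r ≤ x → x + c < r + c * q → W[x]? = W[x + c]?) →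
      (List.replicate q (window W r c)).flatten = window W r (c * q)
  | 0, _, _ => by simp [window]
  | q + 1, r, hper => by
    rw [List.replicate_succ, List.flatten_cons, Nat.mul_succ, Nat.add_comm (c * q), window_add]
    congr 1
    rcases q.eq_zero_or_pos with rfl | hq
    · simp [window]
    have hshift : window W r c = window W (r + c) c :=
      window_eq_window_iff.2 fun o ho => by
        rw [Nat.add_right_comm]
        exact hper (r + o) (by omega) (by nlinarith)
    rw [hshift]
    exact flatten_replicate_window_of_periodic fun x hx hxc =>
      hper x (by omega) (by rw [Nat.mul_succ]; omega)

def HasRightSpecialFactor (W : List α) (m : ℕ) : Prop :=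
  ∃ r r', r + m < W.length ∧ r' + m < W.length ∧ window W r m = window W r' m ∧
    W[r + m]? ≠ W[r' + m]?

theorem HasRightSpecialFactor.of_succ {W : List α} {m : ℕ}
    (h : HasRightSpecialFactor W (m + 1)) : HasRightSpecialFactor W m := by
  obtain ⟨r, r', hr, hr', heq, hne⟩ := h
  refine ⟨r + 1, r' + 1, by omega, by omega, window_eq_window_iff.2 fun o ho => ?_, ?_⟩
  · simpa only [Nat.add_assoc, Nat.add_comm 1] using window_eq_window_iff.1 heq (o + 1) (by omega)
  · simpa only [Nat.add_assoc, Nat.add_comm 1] using hne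

theorem HasRightSpecialFactor.mono {W : List α} {m n : ℕ} (h : HasRightSpecialFactor W n)
    (hmn : m ≤ n) : HasRightSpecialFactor W m := by
  induction n, hmn using Nat.le_induction with
  | base => exact h
  | succ n _ ih => exact ih h.of_succ

/-- Without right special factors of length `m`, every letter is determined by the `m` letters
before it, so a repeated window propagates its shift to the end of the word. -/
theorem getElem?_add_of_window_eq {W : List α} {m i c : ℕ} (hW : ¬ HasRightSpecialFactor W m)
    (heq : window W i m = window W (i + c) m) :
    ∀ x, i ≤ x → x + c < W.length → W[x]? = W[x + c]? := by
  intro x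
  induction x using Nat.strong_induction_on with
  | _ x ih =>
    intro hix hx
    by_cases hxm : x < i + m
    · have := window_eq_window_iff.1 heq (x - i) (by omega)
      rwa [Nat.add_right_comm, Nat.add_sub_cancel' hix] at this
    · have hwin : window W (x - m) m = window W (x - m + c) m :=
        window_eq_window_iff.2 fun o ho => by
          rw [Nat.add_right_comm]
          exact ih _ (by omega) (by omega) (by omega)
      by_contra hne
      refine hW ⟨x - m, x - m + c, by omega, by omega, hwin, ?_⟩
      rwa [Nat.sub_add_cancel (by omega : m ≤ x), Nat.add_right_comm,
        Nat.sub_add_cancel (by omega : m ≤ x)]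

def SuffixOccursOnce (W : List α) (m : ℕ) : Prop :=
  ∀ r, r + m < W.length → window W r m ≠ window W (W.length - m) m

theorem SuffixOccursOnce.mono {W : List α} {m n : ℕ} (h : SuffixOccursOnce W m) (hmn : m ≤ n)
    (hn : n ≤ W.length) : SuffixOccursOnce W n := by
  intro r hr heq
  refine h (r + (n - m)) (by omega) (window_eq_window_iff.2 fun o ho => ?_)
  have := window_eq_window_iff.1 heq (n - m + o) (by omega)
  rwa [← Nat.add_assoc, show W.length - n + (n - m + o) = W.length - m + o by omega] at this

variable [DecidableEq α]

def factors (W : List α) (m : ℕ) : Finset (List α) :=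
  (Finset.range (W.length + 1 - m)).image (window W · m)

theorem mem_factors_iff_exists_window {W v : List α} {m : ℕ} :
    v ∈ factors W m ↔ ∃ r, r + m ≤ W.length ∧ window W r m = v := by
  simp only [factors, Finset.mem_image, Finset.mem_range]
  exact exists_congr fun r => and_congr_left' (by omega)

theorem window_mem_factors {W : List α} {r m : ℕ} (h : r + m ≤ W.length) :
    window W r m ∈ factors W m :=
  mem_factors_iff_exists_window.2 ⟨r, h, rfl⟩

theorem mem_factors {W v : List α} {m : ℕ} :
    v ∈ factors W m ↔ v.length = m ∧ v <:+: W := by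
  rw [mem_factors_iff_exists_window]
  constructor
  · rintro ⟨r, hr, rfl⟩
    exact ⟨length_window hr, window_infix W r m⟩
  · rintro ⟨rfl, hv⟩
    exact exists_window_eq_of_infix hv

theorem coe_factors (W : List α) (m : ℕ) :
    (factors W m : Set (List α)) = {v | v.length = m ∧ v <:+: W} := by
  ext v
  simp [mem_factors]

theorem card_factors_pos {W : List α} {m : ℕ} (h : m ≤ W.length) : 0 < #(factors W m) :=
  Finset.card_pos.2 ⟨_, window_mem_factors (r := 0) (by omega)⟩

theorem exists_window_eq_of_card_factors_le {W : List α} {k s : ℕ}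
    (hcard : #(factors W k) ≤ s) (hlen : s + k ≤ W.length) :
    ∃ i j, i < j ∧ j ≤ s ∧ window W i k = window W j k := by
  have hmaps : Set.MapsTo (window W · k) (Finset.range (s + 1)) (factors W k) := fun r hr =>
    window_mem_factors (by simp at hr; omega)
  obtain ⟨x, hx, y, hy, hxy, heq⟩ :=
    Finset.exists_ne_map_eq_of_card_lt_of_maps_to (by simpa using Nat.lt_succ_of_le hcard) hmaps
  simp only [Finset.mem_range] at hx hy
  rcases lt_or_gt_of_ne hxy with h | h
  exacts [⟨x, y, h, by omega, heq⟩, ⟨y, x, h, by omega, heq.symm⟩]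

theorem exists_pow_infix_of_not_hasRightSpecialFactor {W : List α} {k s t : ℕ}
    (ht : 1 ≤ t) (hs : s ≤ k) (hlen : k + s * t ≤ W.length) (hcard : #(factors W k) ≤ s)
    (hW : ¬ HasRightSpecialFactor W k) :
    ∃ u, u ≠ [] ∧ (List.replicate (t + 1) u).flatten <:+: W := by
  have hst : s ≤ s * t := Nat.le_mul_of_pos_right s ht
  obtain ⟨i, j, hij, hjs, heq⟩ := exists_window_eq_of_card_factors_le hcard (by omega)
  obtain ⟨c, rfl⟩ := Nat.exists_eq_add_of_le hij.le
  have hct : c * t ≤ s * t := Nat.mul_le_mul_right t (by omega)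
  have hend : i + c * (t + 1) ≤ W.length := by rw [Nat.mul_succ]; omega
  have hper := getElem?_add_of_window_eq hW heq
  refine ⟨window W i c, ?_, ?_⟩
  · rw [← List.length_pos_iff, length_window (by nlinarith)]
    omega
  · rw [flatten_replicate_window_of_periodic fun x hx hxc => hper x hx (by omega)]
    exact window_infix _ _ _

theorem factors_subset_image_take {W : List α} {m : ℕ} (hsuf : ¬ SuffixOccursOnce W m) :
    factors W m ⊆ (factors W (m + 1)).image (List.take m) := by
  intro v hv
  obtain ⟨r, hr, rfl⟩ := mem_factors_iff_exists_window.1 hv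
  obtain ⟨r', hr', heq⟩ : ∃ r', r' + m < W.length ∧ window W r' m = window W r m := by
    by_cases h : r + m < W.length
    · exact ⟨r, h, rfl⟩
    · simp only [SuffixOccursOnce, not_forall, not_not] at hsuf
      obtain ⟨r', hr', he⟩ := hsuf
      exact ⟨r', hr', by rw [he, show W.length - m = r by omega]⟩
  exact Finset.mem_image.2 ⟨_, window_mem_factors hr', by rw [take_window _ _ m.le_succ, heq]⟩

theorem not_injOn_take {W : List α} {m : ℕ} (h : HasRightSpecialFactor W m) :
    ¬ Set.InjOn (List.take m) (factors W (m + 1) : Set (List α)) := by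
  obtain ⟨r, r', hr, hr', heq, hne⟩ := h
  intro hinj
  have := hinj (window_mem_factors hr) (window_mem_factors hr')
    (by simp only [take_window _ _ m.le_succ, heq])
  exact hne (window_eq_window_iff.1 this m m.lt_succ_self)

theorem card_factors_lt_card_factors_succ {W : List α} {m : ℕ}
    (hrs : HasRightSpecialFactor W m) (hsuf : ¬ SuffixOccursOnce W m) :
    #(factors W m) < #(factors W (m + 1)) :=
  calc #(factors W m) ≤ #((factors W (m + 1)).image (List.take m)) :=
        Finset.card_le_card (factors_subset_image_take hsuf)
    _ < #(factors W (m + 1)) :=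
        Finset.card_image_le.lt_of_ne (mt Finset.card_image_iff.1 (not_injOn_take hrs))

theorem lt_card_factors {W : List α} {k : ℕ} (hk : k ≤ W.length)
    (hrs : HasRightSpecialFactor W k) (hsuf : ¬ SuffixOccursOnce W k) :
    k < #(factors W k) := by
  suffices ∀ m ≤ k, m < #(factors W m) from this k le_rfl
  intro m hm
  induction m with
  | zero => exact card_factors_pos (Nat.zero_le _)
  | succ m ih =>
    have := card_factors_lt_card_factors_succ (m := m) (hrs.mono (by omega))
      (fun h => hsuf (h.mono (by omega) hk))
    have := ih (by omega)
    omega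

theorem card_factors_dropLast_lt {W : List α} {k : ℕ} (hk : k < W.length)
    (h : SuffixOccursOnce W k) : #(factors W.dropLast k) < #(factors W k) := by
  have hsub : factors W.dropLast k ⊆ (factors W k).erase (window W (W.length - k) k) := by
    intro v hv
    obtain ⟨r, hr, rfl⟩ := mem_factors_iff_exists_window.1 hv
    rw [List.length_dropLast] at hr
    rw [window_dropLast (by omega)]
    exact Finset.mem_erase.2 ⟨h r (by omega), window_mem_factors (by omega)⟩
  calc #(factors W.dropLast k) ≤ #((factors W k).erase (window W (W.length - k) k)) :=
        Finset.card_le_card hsub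
    _ < #(factors W k) := Finset.card_erase_lt_of_mem (window_mem_factors (by omega))

theorem exists_pow_infix_of_card_factors_le {k t : ℕ} (ht : 1 ≤ t) :
    ∀ {s : ℕ} {W : List α}, s ≤ k → k + s * t ≤ W.length → #(factors W k) ≤ s →
      ∃ u, u ≠ [] ∧ (List.replicate (t + 1) u).flatten <:+: W
  | 0, W, _, hlen, hcard => by
    have := card_factors_pos (W := W) (m := k) (by omega)
    omega
  | s + 1, W, hs, hlen, hcard => by
    have hkW : k < W.length := by
      have : 0 < (s + 1) * t := by positivity
      omega
    by_cases hsuf : SuffixOccursOnce W k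
    · have hlen' : k + s * t ≤ W.dropLast.length := by
        rw [List.length_dropLast, Nat.succ_mul] at *
        omega
      have hcard' := card_factors_dropLast_lt hkW hsuf
      obtain ⟨u, hu, hinf⟩ := exists_pow_infix_of_card_factors_le ht (by omega) hlen' (by omega)
      exact ⟨u, hu, hinf.trans (List.dropLast_prefix W).isInfix⟩
    by_cases hrs : HasRightSpecialFactor W k
    · have := lt_card_factors hkW.le hrs hsuf
      omega
    exact exists_pow_infix_of_not_hasRightSpecialFactor ht hs hlen hcard hrs

end FactorComplexity

theorem few_factors_power_general (l k t : ℕ) (ht : 1 ≤ t) (V : Word l)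
    (hlen : V.length = k * t)
    (hfac : Set.ncard {u : Word l | u.length = k ∧ u <:+: V} ≤ k) :
    ContainsPow t V := by
  have hkV : k ≤ V.length := hlen ▸ Nat.le_mul_of_pos_right k ht
  rw [← FactorComplexity.coe_factors, Set.ncard_coe_finset] at hfac
  obtain ⟨t, rfl⟩ := Nat.exists_eq_add_of_le' ht
  rcases t.eq_zero_or_pos with rfl | ht'
  · have := FactorComplexity.card_factors_pos hkV
    exact ⟨V, List.ne_nil_of_length_pos (by omega), by simp⟩
  · exact FactorComplexity.exists_pow_infix_of_card_factors_le ht' le_rfl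
      (by rw [hlen, Nat.mul_add_one]; omega) hfac

theorem few_factors_power (l k t : ℕ) (hk : 1 ≤ k) (ht : 1 ≤ t) (V : Word l)
    (hlen : V.length = k * t)
    (hfac : Set.ncard {u : Word l | u.length = k ∧ u <:+: V} ≤ k) :
    ContainsPow t V :=
  few_factors_power_general l k t ht V hlen hfac
end

section
/- Let n, d ≥ 1 and let W be a word over the alphabet Fin l. If W contains n pairwise disjoint occurrences of one and the same word u of length n·d, then W is n-cancellable: W is n-divided or W contains a d-th power, i.e. v^d is a factor of W for some nonempty word v. -/
open List Real

/-!
Consider the `n` suffixes `u.drop k`, `k < n`, of `u`. If `u.drop k'` is a prefix of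
`u.drop k` for some `k < k'`, then `u.drop k` has period `k' - k < n` and length at least
`d * (k' - k)`, so it begins with a `d`-th power. Otherwise no two of them are
prefix-comparable, so the lexicographic order sorts them into `s₁ ≻ s₂ ≻ ⋯ ≻ sₙ`. Reading `sᵢ`
inside the `i`-th occurrence of `u` gives `n` disjoint factors of `W` from left to right, and
cutting `W` where they start makes `W` `n`-divided, because `≻` is preserved by extending both
words on the right.
-/

section WGt

variable {l : ℕ}

theorem WGt.mono_prefix {u v u' v' : Word l} (h : WGt u v) (hu : u <+: u') (hv : v <+: v') :
    WGt u' v' := by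
  obtain ⟨w, x, y, a, b, hba, rfl, rfl⟩ := h
  obtain ⟨s, rfl⟩ := hu
  obtain ⟨t, rfl⟩ := hv
  exact ⟨w, x ++ s, y ++ t, a, b, hba, by simp, by simp⟩

theorem wGt_of_lt_of_not_prefix {u v : Word l} (h : v < u) (hv : ¬ v <+: u) : WGt u v := by
  induction h with
  | nil => exact absurd nil_prefix hv
  | rel hba => exact ⟨[], _, _, _, _, hba, rfl, rfl⟩
  | @cons c _ _ _ ih =>
    obtain ⟨w, x, y, a, b, hba, rfl, rfl⟩ := ih fun h => hv (cons_prefix_cons.mpr ⟨rfl, h⟩)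
    exact ⟨c :: w, x, y, a, b, hba, rfl, rfl⟩

end WGt

theorem flatten_replicate_prefix_of_prefix_append {α : Type*} {x z : List α} (h : z <+: x ++ z)
    {m : ℕ} (hm : m * x.length ≤ z.length) : (replicate m x).flatten <+: z := by
  have hz : z <+: (replicate m x).flatten ++ z := by
    induction m with
    | zero => simp
    | succ m ih =>
      rw [replicate_succ, flatten_cons, append_assoc]
      exact h.trans ((prefix_append_right_inj x).mpr (ih (by nlinarith)))
  exact prefix_of_prefix_length_le (prefix_append _ _) hz (by simpa using hm)

section ContainsPow

variable {l : ℕ}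

theorem ContainsPow.mono {d : ℕ} {u W : Word l} (h : ContainsPow d u) (huW : u <:+: W) :
    ContainsPow d W :=
  let ⟨x, hx, hxu⟩ := h
  ⟨x, hx, hxu.trans huW⟩

theorem containsPow_of_drop_prefix_drop {n d : ℕ} {u : Word l} (hd : 1 ≤ d)
    (hu : u.length = n * d) {a b : Fin n} (hab : a ≠ b) (h : u.drop a <+: u.drop b) :
    ContainsPow d u := by
  have hnd : n ≤ n * d := Nat.le_mul_of_pos_right n hd
  have hba : (b : ℕ) < a := by
    have := h.length_le
    simp only [length_drop] at this
    have := Fin.val_ne_of_ne hab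
    omega
  set x := (u.drop b).take (a - b)
  have hx : x.length = a - b := by simp [x]; omega
  have hsplit : u.drop b = x ++ u.drop a := by
    rw [← take_append_drop (a - b) (u.drop b), drop_drop, Nat.add_sub_cancel' hba.le]
  have hperiodic : u.drop b <+: x ++ u.drop b := by
    rw [hsplit] at h ⊢
    exact (prefix_append_right_inj x).mpr h
  have hlen : d * x.length ≤ (u.drop b).length := by
    have hn : d * (a - b) + d * b + d ≤ n * d := by
      rw [← mul_add, ← mul_add_one, mul_comm n]
      exact Nat.mul_le_mul_left d (by omega)
    have hb : (b : ℕ) ≤ d * b := Nat.le_mul_of_pos_left b hd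
    simp only [hx, length_drop, hu]
    omega
  refine ⟨x, ne_nil_of_length_pos (by omega), ?_⟩
  exact (flatten_replicate_prefix_of_prefix_append hperiodic hlen).isInfix.trans
    (drop_suffix b u).isInfix

end ContainsPow

section NDivided

variable {l : ℕ}

/-- A pair `(q, v)` stands for an occurrence of `v` at position `q` of `W`. -/
theorem exists_isChain_flatten_eq_drop (W : Word l) (x : ℕ × Word l)
    (rest : List (ℕ × Word l))
    (hchain : (x :: rest).IsChain fun a b => a.1 + a.2.length ≤ b.1 ∧ WGt a.2 b.2)
    (hocc : ∀ y ∈ x :: rest, y.2 ≠ [] ∧ y.2 <+: W.drop y.1) :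
    ∃ w ws, x.2 <+: w ∧ ws.length = rest.length ∧ (∀ w' ∈ w :: ws, w' ≠ []) ∧
      (w :: ws).IsChain WGt ∧ W.drop x.1 = w ++ ws.flatten := by
  induction rest generalizing x with
  | nil =>
    obtain ⟨hx, hxW⟩ := hocc x mem_cons_self
    refine ⟨W.drop x.1, [], hxW, rfl, ?_, isChain_singleton _, by simp⟩
    simpa using hxW.ne_nil hx
  | cons y rest ih =>
    obtain ⟨⟨hsep, hgt⟩, hchain⟩ := isChain_cons_cons.mp hchain
    obtain ⟨w, ws, hyw, hlen, hne, hws, hdrop⟩ :=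
      ih y hchain fun z hz => hocc z (mem_cons_of_mem x hz)
    obtain ⟨hx, hxW⟩ := hocc x mem_cons_self
    have hxc : x.2 <+: (W.drop x.1).take (y.1 - x.1) := prefix_take_iff.mpr ⟨hxW, by omega⟩
    refine ⟨_, w :: ws, hxc, by simp [hlen], ?_,
      isChain_cons_cons.mpr ⟨hgt.mono_prefix hxc hyw, hws⟩, ?_⟩
    · rintro w' (_ | ⟨_, hw'⟩)
      · exact hxc.ne_nil hx
      · exact hne w' hw'
    · calc W.drop x.1 = (W.drop x.1).take (y.1 - x.1) ++ (W.drop x.1).drop (y.1 - x.1) :=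
            (take_append_drop _ _).symm
        _ = _ := by rw [drop_drop, Nat.add_sub_cancel' (by omega), hdrop, flatten_cons]

theorem nDivided_of_decreasing_disjoint_factors {n : ℕ} (W : Word l) (q : Fin n → ℕ)
    (v : Fin n → Word l) (hv : ∀ i, v i ≠ []) (hocc : ∀ i, v i <+: W.drop (q i))
    (hsep : ∀ i j, i < j → q i + (v i).length ≤ q j)
    (hgt : ∀ i j, i < j → WGt (v i) (v j)) :
    NDivided n W := by
  cases n with
  | zero => exact ⟨W, [], rfl, by simp, isChain_nil, by simp⟩
  | succ n =>
    have hchain : (ofFn fun i => (q i, v i)).IsChain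
        fun a b => a.1 + a.2.length ≤ b.1 ∧ WGt a.2 b.2 :=
      isChain_ofFn.mpr fun i hi => ⟨hsep _ _ (Fin.mk_lt_mk.mpr i.lt_succ_self),
        hgt _ _ (Fin.mk_lt_mk.mpr i.lt_succ_self)⟩
    have hmem : ∀ y ∈ ofFn fun i => (q i, v i), y.2 ≠ [] ∧ y.2 <+: W.drop y.1 :=
      forall_mem_ofFn_iff.mpr fun i => ⟨hv i, hocc i⟩
    rw [ofFn_succ] at hchain hmem
    obtain ⟨w, ws, -, hlen, hne, hws, hdrop⟩ := exists_isChain_flatten_eq_drop W _ _ hchain hmem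
    refine ⟨W.take (q 0), w :: ws, by simp [hlen], hne, hws, ?_⟩
    rw [flatten_cons, ← hdrop, take_append_drop]

end NDivided

theorem exists_perm_wGt_of_not_prefix {l n : ℕ} (f : Fin n → Word l)
    (hf : ∀ a b, a ≠ b → ¬ f a <+: f b) :
    ∃ σ : Equiv.Perm (Fin n), ∀ i j, i < j → WGt (f (σ i)) (f (σ j)) := by
  have hinj : Function.Injective f := fun a b hab =>
    by_contra fun h => hf a b h (hab ▸ prefix_refl (f a))
  let σ := Tuple.sort (OrderDual.toDual ∘ f)
  have hanti : StrictAnti (f ∘ σ) :=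
    Antitone.strictAnti_of_injective (fun _ _ h => Tuple.monotone_sort (OrderDual.toDual ∘ f) h)
      (hinj.comp σ.injective)
  exact ⟨σ, fun i j hij =>
    wGt_of_lt_of_not_prefix (hanti hij) (hf _ _ (σ.injective.ne hij.ne'))⟩

theorem repeated_factor_cancellable_general (l n d : ℕ) (hd : 1 ≤ d)
    (W u : Word l) (hu : u.length = n * d)
    (p : Fin n → ℕ)
    (hocc : ∀ i, u <+: W.drop (p i))
    (hdisj : ∀ i j : Fin n, i < j → p i + u.length ≤ p j) :
    NDivided n W ∨ ContainsPow d W := by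
  by_cases hper : ∃ a b : Fin n, a ≠ b ∧ u.drop a <+: u.drop b
  · obtain ⟨a, b, hab, hpre⟩ := hper
    exact .inr <| (containsPow_of_drop_prefix_drop hd hu hab hpre).mono
      ((hocc a).isInfix.trans (drop_suffix _ _).isInfix)
  push Not at hper
  obtain ⟨σ, hσ⟩ := exists_perm_wGt_of_not_prefix (fun k : Fin n => u.drop k) hper
  have hσu (i : Fin n) : (σ i : ℕ) < u.length :=
    hu ▸ (σ i).isLt.trans_le (Nat.le_mul_of_pos_right n hd)
  refine .inl <| nDivided_of_decreasing_disjoint_factors W (fun i => p i + σ i)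
    (fun i => u.drop (σ i)) (fun i => ?_) (fun i => ?_) (fun i j hij => ?_) hσ
  · simpa using hσu i
  · rw [← drop_drop]
    exact (hocc i).drop _
  · have := hdisj i j hij
    have := hσu i
    simp only [length_drop]
    omega

theorem repeated_factor_cancellable (l n d : ℕ) (hn : 1 ≤ n) (hd : 1 ≤ d)
    (W u : Word l) (hu : u.length = n * d)
    (p : Fin n → ℕ)
    (hocc : ∀ i, u <+: W.drop (p i))
    (hdisj : ∀ i j : Fin n, i < j → p i + u.length ≤ p j) :
    NDivided n W ∨ ContainsPow d W :=
  repeated_factor_cancellable_general l n d hd W u hu p hocc hdisj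
end

section
/- Let p ≥ 1 and k ≥ 2 be integers. Let S = (s₁, …, s_L) be a finite sequence of vectors in {0,1}^{k−1}, each having exactly one coordinate equal to 1. Suppose that for every coordinate position s ∈ {1, …, k−1} the following holds: whenever i₁ < i₂ < ⋯ < i_p are p indices such that each of s_{i₁}, …, s_{i_p} has its 1 in coordinate s, there exists an index i with i₁ < i < i_p such that s_i has its 1 in some coordinate strictly smaller than s. Then L ≤ p^{k−1} − 1. -/
/-!
Induct on the number `m` of distinct values. The smallest value `b` occurs fewer than `p` times
(nothing lies below it), and its occurrences cut the sequence into at most `p` pieces avoiding `b`,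
each of length at most `p ^ (m - 1) - 1` by induction. Hence the length is at most
`(p - 1) + p * (p ^ (m - 1) - 1) = p ^ m - 1`.
-/

namespace List

variable {α : Type*}

/-- The paper's condition that between any `p` occurrences of `s` some entry is smaller than `s`. -/
def FewMinRepeats [LinearOrder α] (p : ℕ) (l : List α) : Prop :=
  ∀ s, ∀ t, t <:+: l → (∀ x ∈ t, s ≤ x) → t.count s < p

theorem FewMinRepeats.infix [LinearOrder α] {p : ℕ} {l t : List α} (hl : FewMinRepeats p l)
    (ht : t <:+: l) : FewMinRepeats p t :=
  fun s u hu => hl s u (hu.trans ht)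

theorem length_succ_le_count_succ_mul [DecidableEq α] (b : α) {N : ℕ} :
    ∀ {l : List α}, (∀ t, t <:+: l → b ∉ t → t.length + 1 ≤ N) →
      l.length + 1 ≤ (l.count b + 1) * N
  | l, h => by
    by_cases hb : b ∈ l
    · obtain ⟨l₁, l₂, rfl⟩ := append_of_mem hb
      have h₁ := length_succ_le_count_succ_mul b (l := l₁)
        fun t ht => h t (ht.trans (infix_append [] l₁ (b :: l₂)))
      have h₂ := length_succ_le_count_succ_mul b (l := l₂)
        fun t ht => h t (ht.trans ((suffix_cons b l₂).trans (suffix_append l₁ _)).isInfix)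
      simp only [length_append, length_cons, count_append, count_cons_self]
      linarith
    · simpa [count_eq_zero_of_not_mem hb] using h l (infix_refl l) hb
  termination_by l => l.length

theorem FewMinRepeats.length_succ_le_pow [LinearOrder α] {p m : ℕ} (hp : 0 < p) {l : List α}
    (hl : FewMinRepeats p l) (hm : l.toFinset.card ≤ m) : l.length + 1 ≤ p ^ m := by
  induction m generalizing l with
  | zero => simp_all
  | succ m ih =>
    rcases l.toFinset.eq_empty_or_nonempty with hempty | hne
    · simpa [(toFinset_eq_empty_iff l).1 hempty] using Nat.one_le_pow _ _ hp
    set b := l.toFinset.min' hne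
    have hb : b ∈ l := by simpa using l.toFinset.min'_mem hne
    have hcount : l.count b < p :=
      hl b l (infix_refl l) fun x hx => l.toFinset.min'_le x (mem_toFinset.2 hx)
    have hpieces : ∀ t, t <:+: l → b ∉ t → t.length + 1 ≤ p ^ m := by
      intro t ht hbt
      refine ih (hl.infix ht) ?_
      have : t.toFinset ⊆ l.toFinset.erase b := fun x hx => by
        rw [mem_toFinset] at hx
        exact Finset.mem_erase.2 ⟨fun h => hbt (h ▸ hx), mem_toFinset.2 (ht.subset hx)⟩
      have := Finset.card_le_card this
      rw [Finset.card_erase_of_mem (mem_toFinset.2 hb)] at this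
      omega
    calc l.length + 1 ≤ (l.count b + 1) * p ^ m := length_succ_le_count_succ_mul b hpieces
      _ ≤ p ^ (m + 1) := by rw [pow_succ']; gcongr; omega

theorem fewMinRepeats_ofFn [LinearOrder α] {n p : ℕ} (hp : 0 < p) (σ : Fin n → α)
    (h : ∀ s (g : Fin p → Fin n), StrictMono g → (∀ a, σ (g a) = s) →
      ∃ i, g ⟨0, hp⟩ < i ∧ i < g ⟨p - 1, by omega⟩ ∧ σ i < s) :
    FewMinRepeats p (ofFn σ) := by
  intro s t ht hts
  by_contra! hcount
  obtain ⟨k, hk, ht_get⟩ := infix_iff_getElem?.1 ht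
  rw [length_ofFn] at hk
  have hσt : ∀ j (hj : j < t.length), σ ⟨j + k, by omega⟩ = t[j] := fun j hj => by
    obtain ⟨_, hj'⟩ := by simpa using ht_get j hj
    exact hj'
  obtain ⟨e, he⟩ :=
    sublist_iff_exists_fin_orderEmbedding_get_eq.1 (replicate_sublist_iff.2 hcount)
  let f : Fin p ↪o Fin t.length :=
    (Fin.castOrderIso length_replicate).symm.toOrderEmbedding.trans e
  have hf : ∀ a, t[(f a : ℕ)] = s := fun a => by
    simpa [f] using (he (Fin.cast length_replicate.symm a)).symm
  let g : Fin p → Fin n := fun a => ⟨f a + k, by omega⟩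
  have hg : StrictMono g := fun a b hab => by simpa [g] using hab
  obtain ⟨i, hi₀, hi₁, hσi⟩ := h s g hg fun a => (hσt _ (f a).isLt).trans (hf a)
  have hik : k ≤ i := by
    have : (g ⟨0, hp⟩ : ℕ) < i := hi₀
    simp only [g] at this
    omega
  have hit : i - k < t.length := by
    have : (i : ℕ) < g ⟨p - 1, by omega⟩ := hi₁
    have := (f ⟨p - 1, by omega⟩).isLt
    simp only [g] at *
    omega
  have := hts _ (getElem_mem hit)
  rw [← hσt] at this
  simp only [Nat.sub_add_cancel hik] at this
  exact (hσi.trans_le this).false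

end List

theorem process_lemma (p k : ℕ) (hp : 1 ≤ p)
    (L : ℕ) (S : Fin L → Fin (k - 1) → Fin 2)
    (hone : ∀ i, ∃! s, S i s = 1)
    (hproc : ∀ s : Fin (k - 1), ∀ f : Fin p → Fin L, StrictMono f →
      (∀ a, S (f a) s = 1) →
      ∃ i : Fin L, f ⟨0, by omega⟩ < i ∧ i < f ⟨p - 1, by omega⟩ ∧
        ∃ s' : Fin (k - 1), s' < s ∧ S i s' = 1) :
    L ≤ p ^ (k - 1) - 1 := by
  choose σ hσ hσ_unique using hone
  have hfew : (List.ofFn σ).FewMinRepeats p :=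
    List.fewMinRepeats_ofFn hp σ fun s f hf hfs => by
      obtain ⟨i, hi₀, hi₁, s', hs', hi⟩ := hproc s f hf fun a => hfs a ▸ hσ (f a)
      exact ⟨i, hi₀, hi₁, hσ_unique i s' hi ▸ hs'⟩
  have := hfew.length_succ_le_pow hp
    ((List.ofFn σ).toFinset.card_le_univ.trans_eq (Fintype.card_fin _))
  rw [List.length_ofFn] at this
  omega
end

section
/- Let n ≥ 1, m ≥ 1, let x be a word of length m over the alphabet Fin l, and let W be a word over Fin l. Suppose W contains 2n−1 pairwise disjoint factors occ130urring from left to right in the order F₁, F₂, …, F_{2n−1}, where each F_j = x^{p_j} · v_j with p_j ≥ n an integer and v_j a word of length m with v_j ≠ x. Then W is n-divided. -/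
open List Real

/-! Every `v j` is comparable with `x`, so at least `n` of the `2n - 1` factors fall into one
class: `x ≻ v j` for all of them, or `v j ≻ x` for all of them. Take `n` of these factors from
left to right and keep from the `k`-th one only its suffix `x^(n-k) v j` (first class) or
`x^k v j` (second class). Two consecutive suffixes share a power of `x` and then compare `x`
with some `v j`, so they strictly decrease. Cutting `W` where these suffixes begin gives the
`n`-division. -/

theorem WGt.append {l : ℕ} {u v : Word l} (h : WGt u v) (s t : Word l) :
    WGt (u ++ s) (v ++ t) := by
  obtain ⟨w, u', v', a, b, hba, rfl, rfl⟩ := h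
  exact ⟨w, u' ++ s, v' ++ t, a, b, hba, by simp, by simp⟩

theorem WGt.append_left {l : ℕ} {u v : Word l} (h : WGt u v) (w : Word l) :
    WGt (w ++ u) (w ++ v) := by
  obtain ⟨c, u', v', a, b, hba, rfl, rfl⟩ := h
  exact ⟨w ++ c, u', v', a, b, hba, by simp, by simp⟩

theorem WGt.left_ne_nil {l : ℕ} {u v : Word l} (h : WGt u v) : u ≠ [] := by
  obtain ⟨w, u', v', a, b, -, rfl, -⟩ := h
  simp

theorem WGt.right_ne_nil {l : ℕ} {u v : Word l} (h : WGt u v) : v ≠ [] := by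
  obtain ⟨w, u', v', a, b, -, -, rfl⟩ := h
  simp

theorem wgt_or_wgt_of_length_eq {l : ℕ} :
    ∀ {u v : Word l}, u.length = v.length → u ≠ v → WGt u v ∨ WGt v u
  | [], [], _, hne => absurd rfl hne
  | [], _ :: _, hlen, _ | _ :: _, [], hlen, _ => by simp at hlen
  | a :: u, b :: v, hlen, hne => by
    rcases lt_trichotomy a b with hab | rfl | hab
    · exact Or.inr ⟨[], v, u, b, a, hab, rfl, rfl⟩
    · exact (wgt_or_wgt_of_length_eq (by simpa using hlen) (by simpa using hne)).imp
        (·.append_left [a]) (·.append_left [a])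
    · exact Or.inl ⟨[], u, v, a, b, hab, rfl, rfl⟩

theorem wgt_flatten_replicate_succ_left {l : ℕ} {x v' : Word l} (h : WGt x v') (e : ℕ)
    (v : Word l) : WGt ((replicate (e + 1) x).flatten ++ v) ((replicate e x).flatten ++ v') := by
  simpa [replicate_succ'] using (h.append v []).append_left (replicate e x).flatten

theorem wgt_flatten_replicate_succ_right {l : ℕ} {x v : Word l} (h : WGt v x) (e : ℕ)
    (v' : Word l) : WGt ((replicate e x).flatten ++ v) ((replicate (e + 1) x).flatten ++ v') := by
  simpa [replicate_succ'] using (h.append [] v').append_left (replicate e x).flatten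

theorem List.exists_drop_eq_flatten_ofFn {α : Type*} {W : List α} :
    ∀ {n : ℕ} (c : Fin (n + 1) → ℕ) (P : Fin (n + 1) → List α),
      (∀ k, P k <+: W.drop (c k)) → (∀ i j, i < j → c i + (P i).length ≤ c j) →
      ∃ G : Fin (n + 1) → List α, W.drop (c 0) = (ofFn fun k => P k ++ G k).flatten
  | 0, c, P, hpre, _ => by
    obtain ⟨r, hr⟩ := hpre 0
    exact ⟨fun _ => r, by simp [hr]⟩
  | n + 1, c, P, hpre, hle => by
    obtain ⟨G, hG⟩ := exists_drop_eq_flatten_ofFn (fun k => c k.succ) (fun k => P k.succ)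
      (fun k => hpre k.succ) fun i j hij => hle _ _ (Fin.succ_lt_succ_iff.2 hij)
    obtain ⟨r, hr⟩ := hpre 0
    have h01 := hle 0 (0 : Fin (n + 1)).succ (Fin.succ_pos 0)
    set d := c (0 : Fin (n + 1)).succ - c 0 - (P 0).length
    have hnext : W.drop (c (0 : Fin (n + 1)).succ) = r.drop d := by
      calc W.drop (c (0 : Fin (n + 1)).succ) = (W.drop (c 0)).drop ((P 0).length + d) := by
            rw [drop_drop]; congr 1; omega
        _ = r.drop d := by rw [← hr, ← drop_drop, drop_left]
    refine ⟨Fin.cons (r.take d) G, ?_⟩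
    rw [ofFn_succ, flatten_cons, Fin.cons_zero, append_assoc, ← hr]
    simp only [Fin.cons_succ]
    rw [← hG, hnext, take_append_drop]

theorem nDivided_of_isPrefix_drop {l n : ℕ} {W : Word l} (c : Fin n → ℕ) (P : Fin n → Word l)
    (hpre : ∀ k, P k <+: W.drop (c k)) (hle : ∀ i j, i < j → c i + (P i).length ≤ c j)
    (hne : ∀ k, P k ≠ []) (hgt : ∀ i (h : i + 1 < n), WGt (P ⟨i, by omega⟩) (P ⟨i + 1, h⟩)) :
    NDivided n W := by
  cases n with
  | zero => exact ⟨W, [], rfl, by simp, isChain_nil, by simp⟩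
  | succ n =>
    obtain ⟨G, hG⟩ := exists_drop_eq_flatten_ofFn c P hpre hle
    refine ⟨W.take (c 0), ofFn fun k => P k ++ G k, length_ofFn, ?_,
      isChain_ofFn.2 fun i h => (hgt i h).append _ _, by rw [← hG, take_append_drop]⟩
    simp [mem_ofFn, hne]

theorem length_flatten_replicate {α : Type*} (e : ℕ) (x : List α) :
    (replicate e x).flatten.length = e * x.length := by
  simp [length_flatten]

theorem isPrefix_drop_flatten_replicate_of_le {α : Type*} {x v W : List α} {p q e : ℕ}
    (h : (replicate p x).flatten ++ v <+: W.drop q) (he : e ≤ p) :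
    (replicate e x).flatten ++ v <+: W.drop (q + (p - e) * x.length) := by
  rw [← Nat.sub_add_cancel he, replicate_add, flatten_append, append_assoc] at h
  simpa [drop_drop, length_flatten_replicate] using
    h.drop ((replicate (p - e) x).flatten.length)

theorem nDivided_of_pow_occurrences {l N n : ℕ} (x W : Word l) (p q : Fin N → ℕ)
    (v : Fin N → Word l)
    (hocc : ∀ j, (replicate (p j) x).flatten ++ v j <+: W.drop (q j))
    (horder : ∀ i j, i < j → q i + ((replicate (p i) x).flatten ++ v i).length ≤ q j)
    (s : Fin n → Fin N) (hs : StrictMono s) (e : Fin n → ℕ) (he : ∀ k, e k ≤ p (s k))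
    (hne : ∀ k, v (s k) ≠ [])
    (hgt : ∀ i (h : i + 1 < n),
      WGt ((replicate (e ⟨i, by omega⟩) x).flatten ++ v (s ⟨i, by omega⟩))
        ((replicate (e ⟨i + 1, h⟩) x).flatten ++ v (s ⟨i + 1, h⟩))) :
    NDivided n W := by
  refine nDivided_of_isPrefix_drop (fun k => q (s k) + (p (s k) - e k) * x.length)
    (fun k => (replicate (e k) x).flatten ++ v (s k))
    (fun k => isPrefix_drop_flatten_replicate_of_le (hocc _) (he k)) (fun i j hij => ?_)
    (by simp [hne]) hgt
  have hij' := horder _ _ (hs hij)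
  have hsplit : (p (s i) - e i) * x.length + e i * x.length = p (s i) * x.length := by
    rw [← add_mul, Nat.sub_add_cancel (he i)]
  simp only [length_append, length_flatten_replicate] at hij' ⊢
  omega

theorem Finset.exists_strictMono_fin_of_le_card {α : Type*} [LinearOrder α] {s : Finset α}
    {n : ℕ} (h : n ≤ s.card) : ∃ f : Fin n → α, StrictMono f ∧ ∀ k, f k ∈ s := by
  obtain ⟨t, hts, rfl⟩ := exists_subset_card_eq h
  exact ⟨t.orderEmbOfFin rfl, (t.orderEmbOfFin rfl).strictMono,
    fun k => hts (t.orderEmbOfFin_mem rfl k)⟩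

theorem exists_strictMono_fin_forall_or_forall_not {α : Type*} [LinearOrder α] [Fintype α]
    (P : α → Prop) {n : ℕ} (h : 2 * n ≤ Fintype.card α + 1) :
    (∃ f : Fin n → α, StrictMono f ∧ ∀ k, P (f k)) ∨
      ∃ f : Fin n → α, StrictMono f ∧ ∀ k, ¬P (f k) := by
  classical
  have hsum := Finset.card_filter_add_card_filter_not (s := Finset.univ) P
  rw [Finset.card_univ] at hsum
  by_cases hP : n ≤ (Finset.univ.filter P).card
  · obtain ⟨f, hf, hmem⟩ := Finset.exists_strictMono_fin_of_le_card hP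
    exact Or.inl ⟨f, hf, fun k => (Finset.mem_filter.1 (hmem k)).2⟩
  · obtain ⟨f, hf, hmem⟩ :=
      Finset.exists_strictMono_fin_of_le_card (n := n) (s := Finset.univ.filter fun a => ¬P a)
        (by omega)
    exact Or.inr ⟨f, hf, fun k => (Finset.mem_filter.1 (hmem k)).2⟩

theorem incomparable_periods_divided_general (l n m : ℕ)
    (x : Word l) (hx : x.length = m) (W : Word l)
    (p : Fin (2 * n - 1) → ℕ) (v : Fin (2 * n - 1) → Word l)
    (hp : ∀ j, n ≤ p j)
    (hv : ∀ j, (v j).length = m ∧ v j ≠ x)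
    (q : Fin (2 * n - 1) → ℕ)
    (hocc : ∀ j, ((List.replicate (p j) x).flatten ++ v j) <+: W.drop (q j))
    (horder : ∀ i j : Fin (2 * n - 1), i < j →
      q i + ((List.replicate (p i) x).flatten ++ v i).length ≤ q j) :
    NDivided n W := by
  have hcmp : ∀ j, WGt x (v j) ∨ WGt (v j) x := fun j =>
    wgt_or_wgt_of_length_eq (hx.trans (hv j).1.symm) (hv j).2.symm
  rcases exists_strictMono_fin_forall_or_forall_not (fun j => WGt x (v j)) (n := n)
    (by rw [Fintype.card_fin]; omega) with ⟨s, hs, hxv⟩ | ⟨s, hs, hvx⟩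
  · refine nDivided_of_pow_occurrences x W p q v hocc horder s hs (fun k => n - k)
      (fun k => (n.sub_le k).trans (hp _)) (fun k => (hxv k).right_ne_nil) fun i h => ?_
    rw [show n - i = n - (i + 1) + 1 by omega]
    exact wgt_flatten_replicate_succ_left (hxv _) _ _
  · have hvx' : ∀ k, WGt (v (s k)) x := fun k => (hcmp _).resolve_left (hvx k)
    exact nDivided_of_pow_occurrences x W p q v hocc horder s hs (fun k => k)
      (fun k => k.isLt.le.trans (hp _)) (fun k => (hvx' k).left_ne_nil) fun i h =>
        wgt_flatten_replicate_succ_right (hvx' _) _ _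

theorem incomparable_periods_divided (l n m : ℕ) (hn : 1 ≤ n) (hm : 1 ≤ m)
    (x : Word l) (hx : x.length = m) (W : Word l)
    (p : Fin (2 * n - 1) → ℕ) (v : Fin (2 * n - 1) → Word l)
    (hp : ∀ j, n ≤ p j)
    (hv : ∀ j, (v j).length = m ∧ v j ≠ x)
    (q : Fin (2 * n - 1) → ℕ)
    (hocc : ∀ j, ((List.replicate (p j) x).flatten ++ v j) <+: W.drop (q j))
    (horder : ∀ i j : Fin (2 * n - 1), i < j →
      q i + ((List.replicate (p i) x).flatten ++ v i).length ≤ q j) :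
    NDivided n W :=
  incomparable_periods_divided_general l n m x hx W p v hp hv q hocc horder
end

section
/- Let n ≥ 1 and m ≥ 2 be integers. The number of permutations σ of {1, …, n} that admit no decreasing subsequence of length m — i.e. no indices i₁ < i₂ < ⋯ < i_m with σ(i₁) > σ(i₂) > ⋯ > σ(i_m) — is at most (m−1)^{2n}. -/
/-!
Label each position `i` by the length `ℓ(i)` of the longest decreasing subsequence ending at `i`.
If `j < i` and `σ i < σ j` then `ℓ(j) < ℓ(i)`, so on each level set of `ℓ` the permutation is
increasing (Dilworth's decomposition into chains), and when there is no decreasing subsequence of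
length `m`, `ℓ` takes values in `{1, …, m - 1}`. An increasing bijection between two finite sets is
unique, so `σ` is recovered from the labels of the positions, `ℓ`, together with the labels of the
values, `ℓ ∘ σ⁻¹`: at most `(m - 1) ^ n * (m - 1) ^ n` permutations remain.
-/

theorem eq_of_image_fiber_eq_of_strictMonoOn {α β κ : Type*} [LinearOrder α] [WellFoundedLT α]
    [Preorder β] {f g : α → β} (c : α → κ)
    (himage : ∀ k, f '' (c ⁻¹' {k}) = g '' (c ⁻¹' {k}))
    (hf : ∀ k, StrictMonoOn f (c ⁻¹' {k})) (hg : ∀ k, StrictMonoOn g (c ⁻¹' {k})) :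
    f = g := by
  funext a
  have hfg : (c ⁻¹' {c a}).domRestrict f = (c ⁻¹' {c a}).domRestrict g := by
    rw [← (hf (c a)).domRestrict.range_inj (hg (c a)).domRestrict, Set.range_domRestrict,
      Set.range_domRestrict, himage]
  exact congrFun hfg ⟨a, rfl⟩

section LongestDecreasing

variable {α β : Type*} [LinearOrder α] [Fintype α]

section Preorder

variable [Preorder β] (σ : α → β)

open Classical in
noncomputable def decreasingEndingAt (i : α) : Finset (Finset α) :=
  Finset.univ.filter fun s : Finset α => IsGreatest (s : Set α) i ∧ StrictAntiOn σ (s : Set α)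

noncomputable def longestDecreasingEndingAt (i : α) : ℕ :=
  (decreasingEndingAt σ i).sup Finset.card

theorem mem_decreasingEndingAt {i : α} {s : Finset α} :
    s ∈ decreasingEndingAt σ i ↔ IsGreatest (s : Set α) i ∧ StrictAntiOn σ (s : Set α) := by
  simp [decreasingEndingAt]

theorem card_le_longestDecreasingEndingAt {i : α} {s : Finset α} (hi : IsGreatest (s : Set α) i)
    (hs : StrictAntiOn σ (s : Set α)) : s.card ≤ longestDecreasingEndingAt σ i :=
  Finset.le_sup ((mem_decreasingEndingAt σ).2 ⟨hi, hs⟩)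

theorem exists_card_eq_longestDecreasingEndingAt (i : α) :
    ∃ s : Finset α, IsGreatest (s : Set α) i ∧ StrictAntiOn σ (s : Set α) ∧
      s.card = longestDecreasingEndingAt σ i := by
  have hi : {i} ∈ decreasingEndingAt σ i := (mem_decreasingEndingAt σ).2 (by simp)
  obtain ⟨s, hs, hcard⟩ := Finset.exists_mem_eq_sup _ ⟨_, hi⟩ Finset.card
  obtain ⟨hsi, hσs⟩ := (mem_decreasingEndingAt σ).1 hs
  exact ⟨s, hsi, hσs, hcard.symm⟩

theorem longestDecreasingEndingAt_pos (i : α) : 0 < longestDecreasingEndingAt σ i :=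
  card_le_longestDecreasingEndingAt σ (s := {i}) (by simp) (by simp)

theorem longestDecreasingEndingAt_lt_of_lt {i j : α} (hji : j < i) (hσ : σ i < σ j) :
    longestDecreasingEndingAt σ j < longestDecreasingEndingAt σ i := by
  obtain ⟨s, hj, hs, hcard⟩ := exists_card_eq_longestDecreasingEndingAt σ j
  have hsi : ∀ x ∈ s, x < i := fun x hx => (hj.2 hx).trans_lt hji
  have hi : IsGreatest (insert i s : Set α) i :=
    ⟨Set.mem_insert i _, Set.insert_subset_iff.2 ⟨le_rfl, fun x hx => (hsi x hx).le⟩⟩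
  have hins : StrictAntiOn σ (insert i s : Set α) := by
    refine (strictAntiOn_insert_iff_of_forall_le fun x hx => (hsi x hx).le).2 ⟨?_, hs⟩
    intro x hx _
    exact hσ.trans_le (hs.antitoneOn hx hj.1 (hj.2 hx))
  calc longestDecreasingEndingAt σ j < (insert i s).card := by
        rw [Finset.card_insert_of_notMem fun h => (hsi i h).false, hcard]; omega
    _ ≤ _ := card_le_longestDecreasingEndingAt σ (by simpa using hi) (by simpa using hins)

theorem longestDecreasingEndingAt_lt {m : ℕ}
    (h : ¬∃ f : Fin m → α, StrictMono f ∧ StrictAnti (σ ∘ f)) (i : α) :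
    longestDecreasingEndingAt σ i < m := by
  by_contra! hm
  obtain ⟨s, -, hs, hcard⟩ := exists_card_eq_longestDecreasingEndingAt σ i
  have hf := (s.orderEmbOfFin rfl).strictMono.comp (Fin.strictMono_castLE (hcard ▸ hm))
  refine h ⟨_, hf, fun a b hab => hs ?_ ?_ (hf hab)⟩ <;> exact Finset.orderEmbOfFin_mem _ _ _

end Preorder

section LinearOrder

variable [LinearOrder β]

theorem strictMonoOn_longestDecreasingEndingAt_preimage {σ : α → β}
    (hσ : Function.Injective σ) (k : ℕ) :
    StrictMonoOn σ (longestDecreasingEndingAt σ ⁻¹' {k}) := by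
  intro a ha b hb hab
  refine (lt_or_gt_of_ne (hσ.ne hab.ne)).resolve_right fun hσba => ?_
  exact (longestDecreasingEndingAt_lt_of_lt σ hab hσba).ne (ha.trans hb.symm)

theorem injective_longestDecreasingEndingAt_pair :
    Function.Injective fun σ : α ≃ β =>
      (longestDecreasingEndingAt σ, longestDecreasingEndingAt σ ∘ σ.symm) := by
  intro σ τ h
  obtain ⟨hlen, hlen_symm⟩ := Prod.mk.inj h
  refine DFunLike.coe_injective <| eq_of_image_fiber_eq_of_strictMonoOn
    (longestDecreasingEndingAt σ) (fun k => ?_)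
    (strictMonoOn_longestDecreasingEndingAt_preimage σ.injective)
    (hlen ▸ strictMonoOn_longestDecreasingEndingAt_preimage τ.injective)
  rw [σ.image_eq_preimage_symm, τ.image_eq_preimage_symm, ← Set.preimage_comp,
    ← Set.preimage_comp, hlen_symm, hlen]

end LinearOrder

end LongestDecreasing

theorem latyshev_bound_general (n m : ℕ) :
    Set.ncard {σ : Equiv.Perm (Fin n) |
      ¬ ∃ f : Fin m → Fin n, StrictMono f ∧
        ∀ i j : Fin m, i < j → σ (f j) < σ (f i)} ≤ (m - 1) ^ (2 * n) := by
  set labels := Fintype.piFinset fun _ : Fin n => Finset.Ioo 0 m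
  calc _ ≤ (labels ×ˢ labels).card := by
        rw [← Set.ncard_coe_finset]
        refine Set.ncard_le_ncard_of_injOn _ (fun σ hσ => ?_)
          injective_longestDecreasingEndingAt_pair.injOn
        have hlt := longestDecreasingEndingAt_lt σ fun ⟨f, hf, hσf⟩ =>
          hσ ⟨f, hf, fun _ _ h => hσf h⟩
        simp [labels, longestDecreasingEndingAt_pos, hlt]
    _ = (m - 1) ^ (2 * n) := by
        simp [labels, two_mul, pow_add]

theorem latyshev_bound (n m : ℕ) (hn : 1 ≤ n) (hm : 2 ≤ m) :
    Set.ncard {σ : Equiv.Perm (Fin n) |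
      ¬ ∃ f : Fin m → Fin n, StrictMono f ∧
        ∀ i j : Fin m, i < j → σ (f j) < σ (f i)} ≤ (m - 1) ^ (2 * n) :=
  latyshev_bound_general n m
end
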